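/- arXiv:1502.02745 — 2 statements merged into one kernel-verified Lean document; each statement's English description precedes it below -/
import Mathlib

section
/- Let Y be a Young diagram and let j ≥ 1. Let Y⁺ be the set of cells Y ∪ {(colLen_Y(k), k) : 0 ≤ k < j}, i.e., Y with one extra box added at the bottom of each of its first j columns. Then (a) Y⁺ is again a Young diagram, and (b) the multiset of row lengths of Y⁺ equals the multiset of row lengths of Y together with one additional part equal to j; that is, Y⁺ is the Young diagram obtained from Y by inserting a row with j boxes. -/
/-! The rows of `Y` longer than `j` are exactly its first `colLen_Y(j)` rows, so inserting a part
`j` into the row-length list at position `colLen_Y(j)` keeps it weakly decreasing. The diagram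
with these row lengths agrees with `Y` above row `colLen_Y(j)`, has `j` cells in that row, and
below it is `Y` shifted down by one row; column by column this is `Y` with the cell
`(colLen_Y(k), k)` added for each `k < j`. -/

theorem Antitone.insertAt {f : ℕ → ℕ} (hf : Antitone f) {m j : ℕ}
    (hlt : ∀ i < m, j ≤ f i) (hge : ∀ i, m ≤ i → f i ≤ j) :
    Antitone fun i => if i < m then f i else if i = m then j else f (i - 1) := by
  intro a b hab
  dsimp only
  split_ifs <;> first
    | exact hf (by omega)
    | exact hlt _ (by omega)
    | exact hge _ (by omega)
    | exact le_rfl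

namespace YoungDiagram

variable (Y : YoungDiagram)

theorem lt_rowLen_iff_lt_colLen {i k : ℕ} : k < Y.rowLen i ↔ i < Y.colLen k := by
  rw [← mem_iff_lt_rowLen, mem_iff_lt_colLen]

theorem rowLen_le_iff_colLen_le {i k : ℕ} : Y.rowLen i ≤ k ↔ Y.colLen k ≤ i := by
  simpa only [not_lt] using Y.lt_rowLen_iff_lt_colLen.not

theorem getD_rowLens (i : ℕ) : Y.rowLens.getD i 0 = Y.rowLen i := by
  by_cases hi : i < Y.rowLens.length
  · rw [List.getD_eq_getElem _ _ hi, get_rowLens]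
  · rw [List.getD_eq_default _ _ (not_lt.mp hi), eq_comm, ← Nat.le_zero,
      ← not_lt, lt_rowLen_iff_lt_colLen, ← length_rowLens]
    exact hi

theorem mem_ofRowLens_iff_lt_getD {w : List ℕ} {hw : w.SortedGE} {i k : ℕ} :
    (i, k) ∈ ofRowLens w hw ↔ k < w.getD i 0 := by
  rw [mem_ofRowLens]
  by_cases hi : i < w.length <;> simp [hi]

theorem colLen_le_length_rowLens (j : ℕ) : Y.colLen j ≤ Y.rowLens.length :=
  length_rowLens ▸ Y.colLen_anti 0 j j.zero_le

theorem getD_insertIdx_rowLens (j i : ℕ) :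
    (Y.rowLens.insertIdx (Y.colLen j) j).getD i 0 =
      if i < Y.colLen j then Y.rowLen i else if i = Y.colLen j then j else Y.rowLen (i - 1) := by
  have hm := Y.colLen_le_length_rowLens j
  rw [List.getD_eq_getElem?_getD, List.getElem?_insertIdx]
  split_ifs <;> simp_all [← List.getD_eq_getElem?_getD, getD_rowLens]

theorem sortedGE_insertIdx_rowLens (j : ℕ) :
    (Y.rowLens.insertIdx (Y.colLen j) j).SortedGE := by
  have hanti := Antitone.insertAt (fun _ _ h => Y.rowLen_anti _ _ h) (m := Y.colLen j) (j := j)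
    (fun _ hi => (Y.lt_rowLen_iff_lt_colLen.mpr hi).le)
    (fun _ hi => Y.rowLen_le_iff_colLen_le.mpr hi)
  rw [List.sortedGE_iff_getElem_ge_getElem_of_le]
  intro a b ha hb hba
  rw [List.getElem_eq_getD 0, List.getElem_eq_getD 0, getD_insertIdx_rowLens,
    getD_insertIdx_rowLens]
  exact hanti hba

def insertRow (j : ℕ) : YoungDiagram :=
  ofRowLens _ (Y.sortedGE_insertIdx_rowLens j)

theorem mem_insertRow {j i k : ℕ} :
    (i, k) ∈ Y.insertRow j ↔ (i, k) ∈ Y ∨ k < j ∧ i = Y.colLen k := by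
  have h₁ : k < j → Y.colLen j ≤ Y.colLen k := fun h => Y.colLen_anti k j h.le
  have h₂ : j ≤ k → Y.colLen k ≤ Y.colLen j := Y.colLen_anti j k
  rw [insertRow, mem_ofRowLens_iff_lt_getD, getD_insertIdx_rowLens, mem_iff_lt_colLen]
  split_ifs <;> (try rw [lt_rowLen_iff_lt_colLen]) <;> omega

theorem rowLens_insertRow {j : ℕ} (hj : 0 < j) :
    (Y.insertRow j).rowLens = Y.rowLens.insertIdx (Y.colLen j) j :=
  rowLens_ofRowLens_eq_self fun x hx => by
    rcases List.eq_or_mem_of_mem_insertIdx hx with rfl | hx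
    · exact hj
    · exact Y.pos_of_mem_rowLens x hx

end YoungDiagram

/-- Adding one box at the bottom of each of the first `j ≥ 1` columns of a
Young diagram `Y` produces again a Young diagram `Y⁺`, whose multiset of row lengths is
that of `Y` together with one additional part equal to `j`; i.e. `Y⁺` is obtained from
`Y` by inserting a row with `j` boxes. -/
theorem youngDiagram_add_box_to_first_columns (Y : YoungDiagram) (j : ℕ) (hj : 1 ≤ j) :
    ∃ Yplus : YoungDiagram,
      (Yplus.cells : Set (ℕ × ℕ)) =
        (Y.cells : Set (ℕ × ℕ)) ∪ {p : ℕ × ℕ | ∃ k < j, p = (Y.colLen k, k)} ∧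
      (Yplus.rowLens : Multiset ℕ) = (Y.rowLens : Multiset ℕ) + {j} := by
  refine ⟨Y.insertRow j, ?_, ?_⟩
  · ext ⟨i, k⟩
    simp [YoungDiagram.mem_insertRow]
  · rw [Y.rowLens_insertRow hj, Multiset.coe_eq_coe.mpr
      (List.perm_insertIdx j _ (Y.colLen_le_length_rowLens j)), ← Multiset.cons_coe,
      ← Multiset.singleton_add, add_comm]
end

section
/- Fix an integer c. For f ∈ V and m ∈ ℕ set C_m(f) := (−1)^m ∂^m(∂f/∂x_m), and define the ℤ-bilinear map B : V × V → V by B(f, g) := Σ_{m,n ≥ 0} (∂g/∂x_n) · ∂^n( x_1 · C_m(f) + 2·x_0 · ∂(C_m(f)) + c · ∂^3(C_m(f)) ), a finite sum since each f, g involves only finitely many variables. (By the master formula, B(f,g) is the 0-th product {f_λ g}|_{λ=0} of the Virasoro–Magri PVA with central charge c.) Then Z(B(f, g)) = 0 for all f, g ∈ V; i.e., the Poisson bracket induced on the Zhu algebra ℤ[x] is trivial. -/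
open MvPolynomial

/-- The differential algebra `V = ℤ[x_0, x_1, x_2, …]` (with `x_k` playing the role of
`∂^k L`) and the unique `ℤ`-linear derivation `∂` with `∂ x_k = x_{k+1}`. -/
noncomputable def Dop : Derivation ℤ (MvPolynomial ℕ ℤ) (MvPolynomial ℕ ℤ) :=
  mkDerivation ℤ fun k => X (k + 1)

/-- The `H`-twisted Zhu map `Z : V → ℤ[x]`, the unique `ℤ`-algebra homomorphism with
`Z x_0 = x` and `Z x_k = 0` for `k ≥ 1`. -/
noncomputable def ZhuMap : MvPolynomial ℕ ℤ →ₐ[ℤ] Polynomial ℤ :=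
  aeval fun k => if k = 0 then Polynomial.X else 0

/-- `C_m(f) = (−1)^m ∂^m (∂f/∂x_m)`. -/
noncomputable def Cm (m : ℕ) (f : MvPolynomial ℕ ℤ) : MvPolynomial ℕ ℤ :=
  (-1 : MvPolynomial ℕ ℤ) ^ m * (Dop.toLinearMap ^ m) (pderiv m f)


lemma zhu_Dop (h : MvPolynomial ℕ ℤ) : ZhuMap (Dop h) = 0 := by
  induction h using MvPolynomial.induction_on with
  | C a => rw [← MvPolynomial.algebraMap_eq, Derivation.map_algebraMap, map_zero]
  | add p q hp hq => rw [map_add, map_add, hp, hq, add_zero]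
  | mul_X p n hp =>
      rw [Derivation.leibniz]
      simp only [map_add, map_smul, smul_eq_mul, map_mul, Dop, mkDerivation_X] at *
      simp [ZhuMap] at hp ⊢
      simp [hp]

lemma zhu_Dpow (n : ℕ) (h : MvPolynomial ℕ ℤ) :
    ZhuMap ((Dop.toLinearMap ^ (n + 1)) h) = 0 := by
  rw [pow_succ', Module.End.mul_apply]
  exact zhu_Dop _

/-- Fix an integer central charge `c`.  The `0`-th product
`B(f,g) = {f_λ g}|_{λ=0}` of the Virasoro–Magri PVA is, by the master formula,
`B(f,g) = ∑_{m,n} (∂g/∂x_n) · ∂^n (x_1·C_m(f) + 2 x_0 ∂(C_m(f)) + c ∂³(C_m(f)))`,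
a finite sum: whenever `N` bounds the variables occurring in `f` and `g` (so that all
partial derivatives `∂f/∂x_m`, `∂g/∂x_n` with `m, n ≥ N` vanish), the sum may be taken
over `m, n < N`.  Then `Z(B(f,g)) = 0`: the induced Poisson bracket on the Zhu algebra
`ℤ[x]` is trivial. -/
theorem zhu_of_zeroth_product_eq_zero (c : ℤ) (f g : MvPolynomial ℕ ℤ) (N : ℕ)
    (hf : ∀ m : ℕ, N ≤ m → pderiv m f = 0) (hg : ∀ n : ℕ, N ≤ n → pderiv n g = 0) :
    ZhuMap (∑ n ∈ Finset.range N, ∑ m ∈ Finset.range N,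
      pderiv n g * (Dop.toLinearMap ^ n)
        (X 1 * Cm m f + 2 * X 0 * Dop (Cm m f)
          + C c * (Dop.toLinearMap ^ 3) (Cm m f))) = 0 := by
  rw [map_sum]
  refine Finset.sum_eq_zero fun n _ => ?_
  rw [map_sum]
  refine Finset.sum_eq_zero fun m _ => ?_
  rw [map_mul]
  rcases n with _ | n
  · rw [pow_zero, Module.End.one_apply, map_add, map_add, map_mul, map_mul]
    have h1 : ZhuMap (X 1 : MvPolynomial ℕ ℤ) = 0 := by simp [ZhuMap]
    rw [h1, zero_mul, zhu_Dop, mul_zero, zero_add, zero_add]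
    rw [show (3 : ℕ) = 2 + 1 from rfl, map_mul, zhu_Dpow, mul_zero, mul_zero]
  · rw [zhu_Dpow, mul_zero]
end
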